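/- Let Γ be a bipartite (simple) graph with at least 4 vertices. The following assertions are equivalent: (1) Γ is a discrete half graph; (2) Γ has no induced subgraph isomorphic to the path P5 on 5 vertices, and Γ is critical. -/

import Mathlib

/-!
Formalization of 2-structures (Ehrenfeucht et al.), modules, primality,
criticality, the outside partition/graph, and (discrete) half graphs.
-/

universe u

variable {V : Type u}

/-- A 2-structure on the vertex type `V`: an equivalence relation on ordered
pairs of (distinct) vertices.  Only its values on off-diagonal pairs matter. -/
structure TwoStructure (V : Type u) where
  rel : V × V → V × V → Prop
  refl : ∀ p : V × V, p.1 ≠ p.2 → rel p p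
  symm : ∀ {p q : V × V}, rel p q → rel q p
  trans : ∀ {p q r : V × V}, rel p q → rel q r → rel p r

namespace TwoStructure

variable (σ : TwoStructure V)

/-- `M` is a module of the induced substructure `σ[W]`. -/
def IsModuleOn (W M : Set V) : Prop :=
  M ⊆ W ∧ ∀ x ∈ M, ∀ y ∈ M, ∀ v ∈ W \ M,
    σ.rel (x, v) (y, v) ∧ σ.rel (v, x) (v, y)

/-- The induced substructure `σ[W]` is prime: it has at least 3 vertices and
all of its modules are trivial. -/
def IsPrimeOn (W : Set V) : Prop :=
  3 ≤ W.encard ∧ ∀ M : Set V, σ.IsModuleOn W M → M = ∅ ∨ M = W ∨ ∃ v, M = {v}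

/-- The induced substructure `σ[W]` is `S`-critical: it is prime and removing
any vertex of `S` destroys primality. -/
def IsCriticalOn (W S : Set V) : Prop :=
  σ.IsPrimeOn W ∧ ∀ v ∈ S, ¬ σ.IsPrimeOn (W \ {v})

/-- `Ext_σ(X)`: the vertices `v ∉ X` with `σ[X ∪ {v}]` prime. -/
def extSet (X : Set V) : Set V := {v | v ∉ X ∧ σ.IsPrimeOn (X ∪ {v})}

/-- `⟨X⟩_σ`: the vertices `v ∉ X` such that `X` is a module of `σ[X ∪ {v}]`. -/
def innSet (X : Set V) : Set V := {v | v ∉ X ∧ σ.IsModuleOn (X ∪ {v}) X}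

/-- `X_σ(α)`: the vertices `v ∉ X` such that `{α, v}` is a module of `σ[X ∪ {v}]`. -/
def attSet (X : Set V) (α : V) : Set V :=
  {v | v ∉ X ∧ σ.IsModuleOn (X ∪ {v}) {α, v}}

/-- The outside partition `p_{(σ, X̄)}`. -/
def pBlocks (X : Set V) : Set (Set V) :=
  {σ.extSet X, σ.innSet X} ∪ (fun α => σ.attSet X α) '' X

/-- `⟨X⟩_σ^{(e,f)}` where the classes `e` and `f` are given by representative
pairs: vertices `v ∈ ⟨X⟩_σ` with `(v,α) ≡_σ e` and `(α,v) ≡_σ f` for all `α ∈ X`. -/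
def innSetC (X : Set V) (e f : V × V) : Set V :=
  {v | v ∈ σ.innSet X ∧ ∀ α ∈ X, σ.rel (v, α) e ∧ σ.rel (α, v) f}

/-- `X_σ^{(e,f)}(α)` where the classes `e` and `f` are given by representative
pairs. -/
def attSetC (X : Set V) (α : V) (e f : V × V) : Set V :=
  {v | v ∈ σ.attSet X α ∧ σ.rel (v, α) e ∧ σ.rel (α, v) f}

/-- The refined outside partition `q_{(σ, X̄)}`. -/
def qBlocks (X : Set V) : Set (Set V) :=
  {σ.extSet X} ∪ {B | ∃ e f : V × V, B = σ.innSetC X e f}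
    ∪ {B | ∃ α ∈ X, ∃ e f : V × V, B = σ.attSetC X α e f}

/-- `q^a`: the blocks of `q_{(σ, X̄)}` other than `Ext_σ(X)` that are not of the
symmetric form `⟨X⟩_σ^{(e,e)}` or `X_σ^{(e,e)}(α)`. -/
def qaBlocks (X : Set V) : Set (Set V) :=
  {B | B ∈ σ.qBlocks X ∧ B ≠ σ.extSet X ∧
    ¬ ∃ e : V × V, B = σ.innSetC X e e ∨ ∃ α ∈ X, B = σ.attSetC X α e e}

/-- The outside graph `Γ_{(σ, X̄)}`: on the vertex set `X̄ = Xᶜ`, two distinct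
vertices `v, w` are adjacent when `σ[X ∪ {v, w}]` is prime.  (Vertices of `X`
are not incident to any edge.) -/
def outsideGraph (X : Set V) : SimpleGraph V where
  Adj v w := v ∉ X ∧ w ∉ X ∧ v ≠ w ∧ σ.IsPrimeOn (X ∪ {v, w})
  symm := ⟨by
    rintro v w ⟨hv, hw, hvw, hp⟩
    refine ⟨hw, hv, hvw.symm, ?_⟩
    rwa [Set.pair_comm w v]⟩
  loopless := ⟨by
    rintro v ⟨-, -, h, -⟩
    exact h rfl⟩

/-- `C` is (the vertex set of) a connected component of the outside graph
`Γ_{(σ, X̄)}` (a component of the graph induced on `X̄`). -/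
def IsComponent (X : Set V) (C : Set V) : Prop :=
  ∃ v, v ∉ X ∧ C = {w | (σ.outsideGraph X).Reachable v w}

end TwoStructure

/-- `M` is a module of the subgraph of `G` induced on `W`. -/
def GraphIsModuleOn (G : SimpleGraph V) (W M : Set V) : Prop :=
  M ⊆ W ∧ ∀ v ∈ W \ M, (∀ x ∈ M, G.Adj v x) ∨ (∀ x ∈ M, ¬ G.Adj v x)

/-- The subgraph of `G` induced on `W` is prime. -/
def GraphIsPrimeOn (G : SimpleGraph V) (W : Set V) : Prop :=
  3 ≤ W.encard ∧ ∀ M : Set V, GraphIsModuleOn G W M → M = ∅ ∨ M = W ∨ ∃ v, M = {v}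

/-- The subgraph of `G` induced on `W` is critical: prime, and removing any of
its vertices destroys primality. -/
def GraphIsCriticalOn (G : SimpleGraph V) (W : Set V) : Prop :=
  GraphIsPrimeOn G W ∧ ∀ v ∈ W, ¬ GraphIsPrimeOn G (W \ {v})

/-- The subgraph of `G` induced on `S` contains an induced path `P₅` on five
vertices. -/
def HasInducedP5On (G : SimpleGraph V) (S : Set V) : Prop :=
  ∃ a b c d e : V, a ∈ S ∧ b ∈ S ∧ c ∈ S ∧ d ∈ S ∧ e ∈ S ∧
    a ≠ b ∧ a ≠ c ∧ a ≠ d ∧ a ≠ e ∧ b ≠ c ∧ b ≠ d ∧ b ≠ e ∧ c ≠ d ∧ c ≠ e ∧ d ≠ e ∧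
    G.Adj a b ∧ G.Adj b c ∧ G.Adj c d ∧ G.Adj d e ∧
    ¬ G.Adj a c ∧ ¬ G.Adj a d ∧ ¬ G.Adj a e ∧ ¬ G.Adj b d ∧ ¬ G.Adj b e ∧ ¬ G.Adj c e

/-- `r` is a linear order on the set `X`. -/
def IsLinearOrderOn (X : Set V) (r : V → V → Prop) : Prop :=
  (∀ x ∈ X, r x x) ∧
  (∀ x ∈ X, ∀ y ∈ X, r x y → r y x → x = y) ∧
  (∀ x ∈ X, ∀ y ∈ X, ∀ z ∈ X, r x y → r y z → r x z) ∧
  (∀ x ∈ X, ∀ y ∈ X, r x y ∨ r y x)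

/-- The linear order `r` on `X` is discrete: every element other than the
minimum has an immediate predecessor, and every element other than the maximum
has an immediate successor. -/
def IsDiscreteOn (X : Set V) (r : V → V → Prop) : Prop :=
  (∀ x ∈ X, ¬ (∀ y ∈ X, r x y) →
    ∃ p ∈ X, p ≠ x ∧ r p x ∧ ∀ z ∈ X, r p z → r z x → z = p ∨ z = x) ∧
  (∀ x ∈ X, ¬ (∀ y ∈ X, r y x) →
    ∃ s ∈ X, s ≠ x ∧ r x s ∧ ∀ z ∈ X, r x z → r z s → z = x ∨ z = s)

/-- `G` is the half graph determined by the bipartition `{X, Y}` of its vertex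
set, the linear order `r` on `X`, and the bijection `φ : X → Y`: the edges of
`G` are exactly the pairs `{x, φ x'}` with `x ≤ x'` in `r`. -/
def IsHalfGraphWith (G : SimpleGraph V) (X Y : Set V) (r : V → V → Prop)
    (φ : V → V) : Prop :=
  Disjoint X Y ∧ X ∪ Y = Set.univ ∧ IsLinearOrderOn X r ∧ Set.BijOn φ X Y ∧
    ∀ u v : V, G.Adj u v ↔ ∃ x ∈ X, ∃ x' ∈ X, r x x' ∧
      ((u = x ∧ v = φ x') ∨ (v = x ∧ u = φ x'))

/-- `G` is a half graph. -/
def IsHalfGraph (G : SimpleGraph V) : Prop :=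
  ∃ (X Y : Set V) (r : V → V → Prop) (φ : V → V), IsHalfGraphWith G X Y r φ

/-- `G` is a discrete half graph: a half graph whose defining linear order is
discrete. -/
def IsDiscreteHalfGraph (G : SimpleGraph V) : Prop :=
  ∃ (X Y : Set V) (r : V → V → Prop) (φ : V → V),
    IsHalfGraphWith G X Y r φ ∧ IsDiscreteOn X r

/-- `G` is bipartite: its vertex set splits into two independent sets. -/
def IsBipartite (G : SimpleGraph V) : Prop :=
  ∃ X Y : Set V, Disjoint X Y ∧ X ∪ Y = Set.univ ∧
    (∀ u ∈ X, ∀ v ∈ X, ¬ G.Adj u v) ∧ (∀ u ∈ Y, ∀ v ∈ Y, ¬ G.Adj u v)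

/-!
In a bipartite graph, two vertices with a common neighbour and incomparable neighbourhoods span
an induced `P₅` together with that neighbour and a private neighbour of each. So a bipartite graph
is `P₅`-free iff neighbourhoods of vertices with a common neighbour are nested, and in a connected
one (every prime graph is) the neighbourhoods of each side form a chain.

Deleting `v` from a prime graph destroys primality when some vertex has `v` as its only
neighbour, or two vertices have neighbourhoods differing exactly in `v`. For `P₅`-free bipartite
graphs these are the only obstructions: a nontrivial module of `G - v` meeting both sides is cut
off from the rest of `G - v`, which produces a pendant vertex at `v`, and one inside a side
produces such twins.

In a discrete half graph the obstruction at `x` is `φ x` if `x` is minimal and the pair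
`φ x, φ (pred x)` otherwise; at `φ x` it is `x` or the pair `x, succ x`. A half graph is also
connected and twin-free, and in such a triangle-free graph a module with two vertices contains an
edge and then everything, so it is prime. Conversely, in a critical `P₅`-free bipartite graph
each vertex `v` has a neighbour `m` whose neighbourhood lies in that of every neighbour of `v`.
Such an `m` is unique (prime graphs are twin-free) and the relation is symmetric, so it is an
involution `φ` exchanging the sides, and `G` is the half graph of `φ` on one side ordered by
reverse inclusion of neighbourhoods; the obstructions above then yield immediate predecessors
and successors.
-/

open Set

theorem Bool.eq_of_ne_of_ne {a b c : Bool} (hab : a ≠ b) (hcb : c ≠ b) : a = c := by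
  cases a <;> cases b <;> cases c <;> simp_all

theorem SimpleGraph.Coloring.eq_of_adj_of_adj {G : SimpleGraph V} (C : G.Coloring Bool)
    {a b w : V} (ha : G.Adj a w) (hb : G.Adj b w) : C a = C b :=
  Bool.eq_of_ne_of_ne (C.valid ha) (C.valid hb)

theorem IsBipartite.nonempty_coloring {G : SimpleGraph V} (h : IsBipartite G) :
    Nonempty (G.Coloring Bool) := by
  classical
  obtain ⟨X, Y, -, hXY, hX, hY⟩ := h
  have hmem : ∀ w, w ∉ X → w ∈ Y := fun w hw => (hXY ▸ mem_univ w : w ∈ X ∪ Y).resolve_left hw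
  refine ⟨SimpleGraph.Coloring.mk (fun v => decide (v ∈ X)) fun {u v} huv => ?_⟩
  by_cases hu : u ∈ X <;> by_cases hv : v ∈ X
  · exact absurd huv (hX u hu v hv)
  · simp [hu, hv]
  · simp [hu, hv]
  · exact absurd huv (hY u (hmem u hu) v (hmem v hv))

section Modules

variable {G : SimpleGraph V} {W M : Set V} {a b u v : V}

theorem GraphIsModuleOn.mem_of_adj_of_not_adj (hM : GraphIsModuleOn G W M) (hu : u ∈ W)
    (ha : a ∈ M) (hb : b ∈ M) (hua : G.Adj u a) (hub : ¬ G.Adj u b) : u ∈ M := by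
  by_contra huM
  rcases hM.2 u ⟨hu, huM⟩ with hall | hnone
  exacts [hub (hall b hb), hnone a ha hua]

theorem GraphIsPrimeOn.eq_of_nontrivial (hW : GraphIsPrimeOn G W)
    (hM : GraphIsModuleOn G W M) (hnt : M.Nontrivial) : M = W := by
  rcases hW.2 M hM with h | h | ⟨v, h⟩
  exacts [absurd h hnt.nonempty.ne_empty, h, absurd h hnt.ne_singleton]

theorem le_encard_diff_singleton {n : ℕ∞} (hW : n + 1 ≤ W.encard) (hv : v ∈ W) :
    n ≤ (W \ {v}).encard := by
  rw [← encard_sdiff_singleton_add_one hv] at hW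
  exact (ENat.add_le_add_iff_right ENat.one_ne_top).1 hW

theorem nontrivial_diff_singleton (hW : 3 ≤ W.encard) (hv : v ∈ W) : (W \ {v}).Nontrivial :=
  one_lt_encard_iff_nontrivial.1 ((by norm_num : (1 : ℕ∞) < 2).trans_le
    (le_encard_diff_singleton hW hv))

theorem isPrimeOn_of_forall_nontrivial (hW : 3 ≤ W.encard)
    (h : ∀ M, GraphIsModuleOn G W M → M.Nontrivial → M = W) : GraphIsPrimeOn G W := by
  refine ⟨hW, fun M hM => ?_⟩
  by_cases hnt : M.Nontrivial
  · exact Or.inr (Or.inl (h M hM hnt))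
  · rcases (not_nontrivial_iff.1 hnt).eq_empty_or_singleton with h | h
    exacts [Or.inl h, Or.inr (Or.inr h)]

theorem exists_nontrivial_module_of_not_isPrimeOn (hW : 3 ≤ W.encard)
    (h : ¬ GraphIsPrimeOn G W) : ∃ M, GraphIsModuleOn G W M ∧ M.Nontrivial ∧ M ≠ W := by
  by_contra! hM
  exact h (isPrimeOn_of_forall_nontrivial hW hM)

theorem GraphIsPrimeOn.exists_adj (hW : GraphIsPrimeOn G W) (hv : v ∈ W) :
    ∃ u ∈ W, G.Adj v u := by
  by_contra! hnone
  have hM : GraphIsModuleOn G W (W \ {v}) := by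
    refine ⟨sdiff_subset, fun u hu => Or.inr fun x hx hux => ?_⟩
    have : u = v := by simpa [hu.1] using hu.2
    exact hnone x hx.1 (this ▸ hux)
  have := hW.eq_of_nontrivial hM (nontrivial_diff_singleton hW.1 hv)
  exact (this.symm ▸ hv : v ∈ W \ {v}).2 rfl

theorem GraphIsPrimeOn.eq_of_forall_adj_iff (hW : GraphIsPrimeOn G W) (ha : a ∈ W)
    (hb : b ∈ W) (h : ∀ u ∈ W \ {a, b}, G.Adj u a ↔ G.Adj u b) : a = b := by
  by_contra hab
  have hM : GraphIsModuleOn G W {a, b} := by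
    refine ⟨insert_subset ha (singleton_subset_iff.2 hb), fun u hu => ?_⟩
    by_cases hua : G.Adj u a
    · exact Or.inl (by simpa [hua] using (h u hu).1 hua)
    · exact Or.inr (by simpa [hua] using mt (h u hu).2 hua)
  have := hW.eq_of_nontrivial hM (nontrivial_pair hab)
  have h3 := hW.1
  rw [← this, encard_pair hab] at h3
  norm_num at h3

theorem GraphIsPrimeOn.eq_of_neighborSet_eq (hG : GraphIsPrimeOn G univ)
    (h : G.neighborSet a = G.neighborSet b) : a = b :=
  hG.eq_of_forall_adj_iff (mem_univ a) (mem_univ b) fun u _ => by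
    rw [G.adj_comm u a, G.adj_comm u b]
    exact Set.ext_iff.1 h u

theorem GraphIsPrimeOn.preconnected (hG : GraphIsPrimeOn G univ) : G.Preconnected := by
  intro a b
  have hM : GraphIsModuleOn G univ {w | G.Reachable a w} :=
    ⟨subset_univ _, fun u hu => Or.inr fun m hm hum => hu.2 (hm.trans hum.symm.reachable)⟩
  obtain ⟨u, -, hau⟩ := hG.exists_adj (mem_univ a)
  have := hG.eq_of_nontrivial hM
    (nontrivial_of_mem_mem_ne (SimpleGraph.Reachable.refl a) hau.reachable hau.ne)
  exact (this.symm ▸ mem_univ b : b ∈ {w | G.Reachable a w})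

theorem GraphIsModuleOn.exists_adj_of_nontrivial
    (htwin : ∀ a b, G.neighborSet a = G.neighborSet b → a = b)
    (hM : GraphIsModuleOn G univ M) (hnt : M.Nontrivial) : ∃ a ∈ M, ∃ b ∈ M, G.Adj a b := by
  obtain ⟨a, ha, b, hb, hab⟩ := hnt
  obtain ⟨u, hu⟩ : ∃ u, ¬ (G.Adj a u ↔ G.Adj b u) := by
    by_contra! h
    exact hab (htwin a b (Set.ext h))
  by_cases hau : G.Adj a u
  · have hbu : ¬ G.Adj u b := fun h => hu (iff_of_true hau h.symm)
    exact ⟨u, hM.mem_of_adj_of_not_adj (mem_univ u) ha hb hau.symm hbu, a, ha, hau.symm⟩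
  · have hbu : G.Adj b u := by_contra fun h => hu (iff_of_false hau h)
    exact ⟨u, hM.mem_of_adj_of_not_adj (mem_univ u) hb ha hbu.symm (fun h => hau h.symm),
      b, hb, hbu.symm⟩

theorem GraphIsModuleOn.eq_univ_of_adj (C : G.Coloring Bool) (hconn : G.Preconnected)
    (hM : GraphIsModuleOn G univ M) (ha : a ∈ M) (hb : b ∈ M) (hab : G.Adj a b) : M = univ := by
  refine eq_univ_of_forall fun w => by_contra fun hw => ?_
  obtain ⟨d, -, hd1, hd2⟩ := (hconn a w).some.exists_boundary_dart M ha hw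
  rcases hM.2 d.snd ⟨mem_univ _, hd2⟩ with hall | hnone
  · exact C.valid hab (C.eq_of_adj_of_adj (hall a ha).symm (hall b hb).symm)
  · exact hnone _ hd1 d.adj.symm

theorem isPrimeOn_univ_of_twinFree (C : G.Coloring Bool) (hconn : G.Preconnected)
    (htwin : ∀ a b, G.neighborSet a = G.neighborSet b → a = b)
    (hcard : 3 ≤ (univ : Set V).encard) : GraphIsPrimeOn G univ :=
  isPrimeOn_of_forall_nontrivial hcard fun _ hM hnt => by
    obtain ⟨a, ha, b, hb, hab⟩ := hM.exists_adj_of_nontrivial htwin hnt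
    exact hM.eq_univ_of_adj C hconn ha hb hab

def HasPendantOrTwinsAt (G : SimpleGraph V) (v : V) : Prop :=
  (∃ a, G.neighborSet a = {v}) ∨
    ∃ a b, a ≠ b ∧ b ≠ v ∧ v ∉ G.neighborSet b ∧ G.neighborSet a = insert v (G.neighborSet b)

theorem HasPendantOrTwinsAt.not_isPrimeOn_diff (h : HasPendantOrTwinsAt G v) :
    ¬ GraphIsPrimeOn G (univ \ {v}) := by
  intro hp
  rcases h with ⟨a, ha⟩ | ⟨a, b, hab, hbv, -, h⟩
  · have hav : a ≠ v := G.ne_of_adj (show v ∈ G.neighborSet a from ha ▸ rfl)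
    obtain ⟨w, hw, haw⟩ := hp.exists_adj (⟨mem_univ a, hav⟩ : a ∈ univ \ {v})
    exact hw.2 (by rw [← ha]; exact haw)
  · have hav : a ≠ v := G.ne_of_adj (show v ∈ G.neighborSet a from h ▸ mem_insert v _)
    refine hab (hp.eq_of_forall_adj_iff ⟨mem_univ a, hav⟩ ⟨mem_univ b, hbv⟩ fun u hu => ?_)
    rw [G.adj_comm u a, G.adj_comm u b]
    change u ∈ G.neighborSet a ↔ u ∈ G.neighborSet b
    have huv : u ≠ v := hu.1.2
    rw [h, mem_insert_iff, or_iff_right huv]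

end Modules

section Nested

variable {G : SimpleGraph V} {a b w : V}

theorem not_hasInducedP5On_of_nested
    (h : ∀ a b w, G.Adj a w → G.Adj b w →
      G.neighborSet a ⊆ G.neighborSet b ∨ G.neighborSet b ⊆ G.neighborSet a) :
    ¬ HasInducedP5On G univ := by
  rintro ⟨a, b, c, d, e, -, -, -, -, -, -, -, -, -, -, -, -, -, -, -,
    hab, hbc, hcd, hde, -, had, -, -, hbe, -⟩
  rcases h b d c hbc hcd.symm with hbd | hdb
  exacts [had (hbd hab.symm).symm, hbe (hdb hde)]

theorem nested_of_adj_of_adj (C : G.Coloring Bool) (hP5 : ¬ HasInducedP5On G univ)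
    (haw : G.Adj a w) (hbw : G.Adj b w) :
    G.neighborSet a ⊆ G.neighborSet b ∨ G.neighborSet b ⊆ G.neighborSet a := by
  by_contra! hn
  obtain ⟨y, hya, hyb⟩ := not_subset.1 hn.1
  obtain ⟨y', hy'b, hy'a⟩ := not_subset.1 hn.2
  rw [G.mem_neighborSet] at hya hyb hy'a hy'b
  have hCb : C b = C a := (C.eq_of_adj_of_adj haw hbw).symm
  have hCy : C y = !C a := Bool.eq_not_iff.2 (C.valid hya).symm
  have hCw : C w = !C a := Bool.eq_not_iff.2 (C.valid haw).symm
  have hCy' : C y' = !C a := hCb ▸ Bool.eq_not_iff.2 (C.valid hy'b).symm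
  exact hP5 ⟨y, a, w, b, y', trivial, trivial, trivial, trivial, trivial,
    hya.ne.symm, fun h => hyb (h ▸ hbw), by rintro rfl; exact C.valid hya hCb.symm,
    fun h => hyb (h ▸ hy'b), haw.ne, fun h => hy'a (h ▸ hy'b),
    by rintro rfl; exact C.valid hy'b hCb, hbw.ne.symm, by rintro rfl; exact hy'a haw, hy'b.ne,
    hya.symm, haw, hbw.symm, hy'b,
    fun h => C.valid h (by rw [hCy, hCw]), fun h => hyb h.symm,
    fun h => C.valid h (by rw [hCy, hCy']), fun h => C.valid h hCb.symm, hy'a,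
    fun h => C.valid h (by rw [hCw, hCy'])⟩

theorem nested_trans (C : G.Coloring Bool) (hP5 : ¬ HasInducedP5On G univ)
    (hw : (G.neighborSet w).Nonempty)
    (haw : G.neighborSet a ⊆ G.neighborSet w ∨ G.neighborSet w ⊆ G.neighborSet a)
    (hwb : G.neighborSet w ⊆ G.neighborSet b ∨ G.neighborSet b ⊆ G.neighborSet w) :
    G.neighborSet a ⊆ G.neighborSet b ∨ G.neighborSet b ⊆ G.neighborSet a := by
  rcases haw with haw | hwa <;> rcases hwb with hwb | hbw
  · exact Or.inl (haw.trans hwb)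
  · by_contra! hn
    obtain ⟨y, hya, hyb⟩ := not_subset.1 hn.1
    obtain ⟨y', hy'b, hy'a⟩ := not_subset.1 hn.2
    -- `y` and `y'` have the common neighbour `w`, yet `a` and `b` separate them
    rcases nested_of_adj_of_adj C hP5 (haw hya).symm (hbw hy'b).symm with h | h
    · exact hy'a (h (G.mem_neighborSet y a |>.2 hya.symm)).symm
    · exact hyb (h (G.mem_neighborSet y' b |>.2 hy'b.symm)).symm
  · obtain ⟨u, hu⟩ := hw
    exact nested_of_adj_of_adj C hP5 (hwa hu) (hwb hu)
  · exact Or.inr (hbw.trans hwa)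

theorem nested_of_walk (C : G.Coloring Bool) (hP5 : ¬ HasInducedP5On G univ) {u : V}
    (p : G.Walk u b) :
    (C u = C b → G.neighborSet u ⊆ G.neighborSet b ∨ G.neighborSet b ⊆ G.neighborSet u) ∧
    (C u ≠ C b → ∀ a, G.Adj a u →
      G.neighborSet a ⊆ G.neighborSet b ∨ G.neighborSet b ⊆ G.neighborSet a) := by
  induction p with
  | nil => exact ⟨fun _ => Or.inl subset_rfl, fun h => absurd rfl h⟩
  | @cons u w b huw q ih =>
    have hCuw := C.valid huw
    refine ⟨fun hub => ih.2 (hub ▸ hCuw.symm) u huw, fun hub a hau => ?_⟩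
    have hwb : C w = C b := Bool.eq_of_ne_of_ne hCuw.symm (Ne.symm hub)
    exact nested_trans C hP5 ⟨u, huw.symm⟩ (nested_of_adj_of_adj C hP5 hau huw.symm) (ih.1 hwb)

theorem nested_of_color_eq (C : G.Coloring Bool) (hP5 : ¬ HasInducedP5On G univ)
    (hconn : G.Preconnected) (h : C a = C b) :
    G.neighborSet a ⊆ G.neighborSet b ∨ G.neighborSet b ⊆ G.neighborSet a :=
  (nested_of_walk C hP5 (hconn a b).some).1 h

end Nested

namespace IsHalfGraphWith

variable {G : SimpleGraph V} {X Y : Set V} {r : V → V → Prop} {φ : V → V}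
  {a b u v w x x' : V}

theorem mem_or_mem (hH : IsHalfGraphWith G X Y r φ) (v : V) : v ∈ X ∨ v ∈ Y :=
  (hH.2.1 ▸ mem_univ v : v ∈ X ∪ Y)

theorem map_mem (hH : IsHalfGraphWith G X Y r φ) (hx : x ∈ X) : φ x ∈ Y :=
  hH.2.2.2.1.1 hx

theorem exists_map_eq (hH : IsHalfGraphWith G X Y r φ) (hy : v ∈ Y) : ∃ x ∈ X, φ x = v :=
  hH.2.2.2.1.2.2 hy

theorem injOn (hH : IsHalfGraphWith G X Y r φ) : InjOn φ X := hH.2.2.2.1.2.1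

theorem notMem_right (hH : IsHalfGraphWith G X Y r φ) (hx : x ∈ X) : x ∉ Y :=
  disjoint_left.1 hH.1 hx

theorem rel_refl (hH : IsHalfGraphWith G X Y r φ) (hx : x ∈ X) : r x x := hH.2.2.1.1 x hx

theorem rel_antisymm (hH : IsHalfGraphWith G X Y r φ) (hx : x ∈ X) (hx' : x' ∈ X)
    (h : r x x') (h' : r x' x) : x = x' :=
  hH.2.2.1.2.1 x hx x' hx' h h'

theorem rel_trans (hH : IsHalfGraphWith G X Y r φ) (ha : a ∈ X) (hx : x ∈ X) (hb : b ∈ X)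
    (h : r a x) (h' : r x b) : r a b :=
  hH.2.2.1.2.2.1 a ha x hx b hb h h'

theorem rel_total (hH : IsHalfGraphWith G X Y r φ) (hx : x ∈ X) (hx' : x' ∈ X) :
    r x x' ∨ r x' x :=
  hH.2.2.1.2.2.2 x hx x' hx'

theorem isBipartiteWith (hH : IsHalfGraphWith G X Y r φ) : G.IsBipartiteWith X Y where
  disjoint := hH.1
  mem_of_adj u v huv := by
    obtain ⟨x, hx, x', hx', -, ⟨rfl, rfl⟩ | ⟨rfl, rfl⟩⟩ := (hH.2.2.2.2 u v).1 huv
    exacts [Or.inl ⟨hx, hH.map_mem hx'⟩, Or.inr ⟨hH.map_mem hx', hx⟩]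

theorem adj_map_iff (hH : IsHalfGraphWith G X Y r φ) (hx : x ∈ X) (hx' : x' ∈ X) :
    G.Adj x (φ x') ↔ r x x' := by
  refine ⟨fun h => ?_, fun h => (hH.2.2.2.2 _ _).2 ⟨x, hx, x', hx', h, Or.inl ⟨rfl, rfl⟩⟩⟩
  obtain ⟨a, ha, b, hb, hab, ⟨rfl, hφ⟩ | ⟨rfl, -⟩⟩ := (hH.2.2.2.2 _ _).1 h
  · rwa [hH.injOn hx' hb hφ]
  · exact absurd (hH.map_mem hx') (hH.notMem_right ha)

theorem mem_neighborSet_map_iff (hH : IsHalfGraphWith G X Y r φ) (hx' : x' ∈ X) :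
    u ∈ G.neighborSet (φ x') ↔ u ∈ X ∧ r u x' := by
  refine ⟨fun h => ?_, fun h => (hH.adj_map_iff h.1 hx').2 h.2 |>.symm⟩
  have hu : u ∈ X := hH.isBipartiteWith.mem_of_mem_adj' (hH.map_mem hx') h.symm
  exact ⟨hu, (hH.adj_map_iff hu hx').1 h.symm⟩

theorem mem_neighborSet_iff (hH : IsHalfGraphWith G X Y r φ) (hx : x ∈ X) :
    u ∈ G.neighborSet x ↔ ∃ z ∈ X, r x z ∧ φ z = u := by
  refine ⟨fun h => ?_, by rintro ⟨z, hz, h, rfl⟩; exact (hH.adj_map_iff hx hz).2 h⟩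
  obtain ⟨z, hz, rfl⟩ := hH.exists_map_eq (hH.isBipartiteWith.mem_of_mem_adj hx h)
  exact ⟨z, hz, (hH.adj_map_iff hx hz).1 h, rfl⟩

theorem neighborSet_map_subset (hH : IsHalfGraphWith G X Y r φ) (hx : x ∈ X) (hx' : x' ∈ X)
    (h : r x x') : G.neighborSet (φ x) ⊆ G.neighborSet (φ x') := fun u hu => by
  rw [hH.mem_neighborSet_map_iff hx] at hu
  exact (hH.mem_neighborSet_map_iff hx').2 ⟨hu.1, hH.rel_trans hu.1 hx hx' hu.2 h⟩

theorem neighborSet_subset (hH : IsHalfGraphWith G X Y r φ) (hx : x ∈ X) (hx' : x' ∈ X)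
    (h : r x x') : G.neighborSet x' ⊆ G.neighborSet x := fun u hu => by
  obtain ⟨z, hz, hx'z, rfl⟩ := (hH.mem_neighborSet_iff hx').1 hu
  exact (hH.mem_neighborSet_iff hx).2 ⟨z, hz, hH.rel_trans hx hx' hz h hx'z, rfl⟩

theorem nested_of_adj_of_adj (hH : IsHalfGraphWith G X Y r φ) (ha : G.Adj a w)
    (hb : G.Adj b w) :
    G.neighborSet a ⊆ G.neighborSet b ∨ G.neighborSet b ⊆ G.neighborSet a := by
  rcases hH.mem_or_mem w with hw | hw
  · obtain ⟨x, hx, rfl⟩ := hH.exists_map_eq (hH.isBipartiteWith.mem_of_mem_adj hw ha.symm)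
    obtain ⟨x', hx', rfl⟩ := hH.exists_map_eq (hH.isBipartiteWith.mem_of_mem_adj hw hb.symm)
    exact (hH.rel_total hx hx').imp (hH.neighborSet_map_subset hx hx')
      (hH.neighborSet_map_subset hx' hx)
  · have ha := hH.isBipartiteWith.mem_of_mem_adj' hw ha
    have hb := hH.isBipartiteWith.mem_of_mem_adj' hw hb
    exact (hH.rel_total hb ha).imp (hH.neighborSet_subset hb ha) (hH.neighborSet_subset ha hb)

theorem reachable_of_mem (hH : IsHalfGraphWith G X Y r φ) (hx : x ∈ X) (hx' : x' ∈ X) :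
    G.Reachable x x' := by
  wlog h : r x x' generalizing x x'
  · exact (this hx' hx ((hH.rel_total hx hx').resolve_left h)).symm
  exact ((hH.adj_map_iff hx hx').2 h).reachable.trans
    ((hH.adj_map_iff hx' hx').2 (hH.rel_refl hx')).reachable.symm

theorem exists_reachable_mem (hH : IsHalfGraphWith G X Y r φ) (v : V) :
    ∃ x ∈ X, G.Reachable v x := by
  rcases hH.mem_or_mem v with hv | hv
  · exact ⟨v, hv, SimpleGraph.Reachable.refl v⟩
  · obtain ⟨x, hx, rfl⟩ := hH.exists_map_eq hv
    exact ⟨x, hx, ((hH.adj_map_iff hx hx).2 (hH.rel_refl hx)).reachable.symm⟩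

theorem preconnected (hH : IsHalfGraphWith G X Y r φ) : G.Preconnected := fun u v => by
  obtain ⟨x, hx, hux⟩ := hH.exists_reachable_mem u
  obtain ⟨x', hx', hvx'⟩ := hH.exists_reachable_mem v
  exact hux.trans ((hH.reachable_of_mem hx hx').trans hvx'.symm)

theorem eq_of_neighborSet_eq (hH : IsHalfGraphWith G X Y r φ)
    (h : G.neighborSet u = G.neighborSet v) : u = v := by
  rcases hH.mem_or_mem u with hu | hu
  · have hφu : φ u ∈ G.neighborSet v := h ▸ (hH.adj_map_iff hu hu).2 (hH.rel_refl hu)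
    have hv : v ∈ X := hH.isBipartiteWith.mem_of_mem_adj' (hH.map_mem hu) hφu
    have hφv : φ v ∈ G.neighborSet u := h ▸ (hH.adj_map_iff hv hv).2 (hH.rel_refl hv)
    exact hH.rel_antisymm hu hv ((hH.adj_map_iff hu hv).1 hφv) ((hH.adj_map_iff hv hu).1 hφu)
  · obtain ⟨x, hx, rfl⟩ := hH.exists_map_eq hu
    have hxv : x ∈ G.neighborSet v := h ▸ (hH.mem_neighborSet_map_iff hx).2 ⟨hx, hH.rel_refl hx⟩
    obtain ⟨x', hx', rfl⟩ := hH.exists_map_eq (hH.isBipartiteWith.mem_of_mem_adj hx hxv.symm)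
    have hx'u : x' ∈ G.neighborSet (φ x) :=
      h ▸ (hH.mem_neighborSet_map_iff hx').2 ⟨hx', hH.rel_refl hx'⟩
    rw [hH.mem_neighborSet_map_iff hx'] at hxv
    rw [hH.mem_neighborSet_map_iff hx] at hx'u
    exact congrArg φ (hH.rel_antisymm hx hx' hxv.2 hx'u.2)

theorem hasPendantOrTwinsAt_of_mem (hH : IsHalfGraphWith G X Y r φ) (hdisc : IsDiscreteOn X r)
    (hx : x ∈ X) : HasPendantOrTwinsAt G x := by
  by_cases hmin : ∀ y ∈ X, r x y
  · refine Or.inl ⟨φ x, Set.ext fun u => ?_⟩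
    rw [hH.mem_neighborSet_map_iff hx, mem_singleton_iff]
    refine ⟨fun h => hH.rel_antisymm h.1 hx h.2 (hmin u h.1), ?_⟩
    rintro rfl
    exact ⟨hx, hH.rel_refl hx⟩
  · obtain ⟨p, hp, hpx, hpx', hbetween⟩ := hdisc.1 x hx hmin
    refine Or.inr ⟨φ x, φ p, fun h => hpx (hH.injOn hx hp h).symm,
      fun h => hH.notMem_right hx (h ▸ hH.map_mem hp),
      fun h => hpx (hH.rel_antisymm hp hx hpx' ((hH.mem_neighborSet_map_iff hp).1 h).2),
      Set.ext fun u => ?_⟩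
    rw [mem_insert_iff, hH.mem_neighborSet_map_iff hx, hH.mem_neighborSet_map_iff hp]
    refine ⟨fun ⟨hu, hux⟩ => ?_, ?_⟩
    · rcases hH.rel_total hu hp with hup | hpu
      · exact Or.inr ⟨hu, hup⟩
      · rcases hbetween u hu hpu hux with rfl | rfl
        exacts [Or.inr ⟨hu, hH.rel_refl hu⟩, Or.inl rfl]
    · rintro (rfl | ⟨hu, hup⟩)
      exacts [⟨hx, hH.rel_refl hx⟩, ⟨hu, hH.rel_trans hu hp hx hup hpx'⟩]

theorem hasPendantOrTwinsAt_map (hH : IsHalfGraphWith G X Y r φ) (hdisc : IsDiscreteOn X r)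
    (hx : x ∈ X) : HasPendantOrTwinsAt G (φ x) := by
  by_cases hmax : ∀ y ∈ X, r y x
  · refine Or.inl ⟨x, Set.ext fun u => ?_⟩
    rw [hH.mem_neighborSet_iff hx, mem_singleton_iff]
    refine ⟨fun ⟨z, hz, hxz, hzu⟩ => ?_, fun h => ⟨x, hx, hH.rel_refl hx, h.symm⟩⟩
    rw [← hzu, hH.rel_antisymm hz hx (hmax z hz) hxz]
  · obtain ⟨s, hs, hsx, hxs, hbetween⟩ := hdisc.2 x hx hmax
    refine Or.inr ⟨x, s, hsx.symm, fun h => hH.notMem_right hs (h ▸ hH.map_mem hx),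
      fun h => hsx (hH.rel_antisymm hs hx ((hH.adj_map_iff hs hx).1 h) hxs),
      Set.ext fun u => ?_⟩
    rw [mem_insert_iff, hH.mem_neighborSet_iff hx, hH.mem_neighborSet_iff hs]
    refine ⟨fun ⟨z, hz, hxz, hzu⟩ => ?_, ?_⟩
    · rcases hH.rel_total hz hs with hzs | hsz
      · rcases hbetween z hz hxz hzs with rfl | rfl
        exacts [Or.inl hzu.symm, Or.inr ⟨z, hz, hH.rel_refl hz, hzu⟩]
      · exact Or.inr ⟨z, hz, hsz, hzu⟩
    · rintro (rfl | ⟨z, hz, hsz, rfl⟩)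
      exacts [⟨x, hx, hH.rel_refl hx, rfl⟩, ⟨z, hz, hH.rel_trans hx hs hz hxs hsz, rfl⟩]

theorem hasPendantOrTwinsAt (hH : IsHalfGraphWith G X Y r φ) (hdisc : IsDiscreteOn X r)
    (v : V) : HasPendantOrTwinsAt G v := by
  rcases hH.mem_or_mem v with hv | hv
  · exact hH.hasPendantOrTwinsAt_of_mem hdisc hv
  · obtain ⟨x, hx, rfl⟩ := hH.exists_map_eq hv
    exact hH.hasPendantOrTwinsAt_map hdisc hx

end IsHalfGraphWith

section Critical

variable {G : SimpleGraph V} {M : Set V} {a b p q v : V}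

theorem exists_pendant_of_module_of_color_ne (C : G.Coloring Bool)
    (hP5 : ¬ HasInducedP5On G univ) (hG : GraphIsPrimeOn G univ)
    (hM : GraphIsModuleOn G (univ \ {v}) M) (hMW : M ≠ univ \ {v}) (hp : p ∈ M) (hq : q ∈ M)
    (hpq : C p ≠ C q) : ∃ a, G.neighborSet a = {v} := by
  obtain ⟨w, hw, hwM⟩ : ∃ w ∈ univ \ {v}, w ∉ M := not_subset.1 fun h => hMW (hM.1.antisymm h)
  -- no vertex outside `M` sees both colours of `M`, so `M` is cut off from the rest of `G - v`
  have hsep : ∀ m ∈ M, ∀ u ∈ univ \ {v}, u ∉ M → ¬ G.Adj u m := by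
    intro m hm u hu huM hum
    rcases hM.2 u ⟨hu, huM⟩ with hall | hnone
    exacts [hpq (C.eq_of_adj_of_adj (hall p hp).symm (hall q hq).symm), hnone m hm hum]
  obtain ⟨m, hm, hmw⟩ : ∃ m ∈ M, C w = C m := by
    by_cases hpw : C w = C p
    · exact ⟨p, hp, hpw⟩
    · exact ⟨q, hq, Bool.eq_of_ne_of_ne hpw (Ne.symm hpq)⟩
  have hcommon : ∀ x ∈ G.neighborSet w, x ∈ G.neighborSet m → x = v := by
    intro x hxw hxm
    by_contra hxv
    by_cases hxM : x ∈ M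
    · exact hsep x hxM w hw hwM hxw
    · exact hsep m hm x ⟨mem_univ x, hxv⟩ hxM hxm.symm
  have hpendant : ∀ x, G.neighborSet x ⊆ G.neighborSet w → G.neighborSet x ⊆ G.neighborSet m →
      G.neighborSet x = {v} := by
    intro x hxw hxm
    obtain ⟨y, -, hxy⟩ := hG.exists_adj (mem_univ x)
    have hyv := hcommon y (hxw hxy) (hxm hxy)
    exact eq_singleton_iff_unique_mem.2
      ⟨hyv ▸ hxy, fun z hz => hcommon z (hxw hz) (hxm hz)⟩
  rcases nested_of_color_eq C hP5 hG.preconnected hmw with h | h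
  exacts [⟨w, hpendant w subset_rfl h⟩, ⟨m, hpendant m h subset_rfl⟩]

theorem neighborSet_eq_insert_of_forall_ne (h : ∀ u ≠ v, G.Adj a u ↔ G.Adj b u)
    (ha : v ∈ G.neighborSet a) (hb : v ∉ G.neighborSet b) :
    G.neighborSet a = insert v (G.neighborSet b) := by
  ext u
  by_cases huv : u = v
  · subst huv
    exact iff_of_true ha (mem_insert u _)
  · rw [mem_insert_iff, or_iff_right huv]
    exact h u huv

theorem exists_twins_of_module_of_color_eq (C : G.Coloring Bool) (hG : GraphIsPrimeOn G univ)
    (hM : GraphIsModuleOn G (univ \ {v}) M) (ha : a ∈ M) (hb : b ∈ M) (hab : a ≠ b)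
    (hmono : ∀ u ∈ M, C u = C a) :
    ∃ a b, a ≠ b ∧ b ≠ v ∧ v ∉ G.neighborSet b ∧
      G.neighborSet a = insert v (G.neighborSet b) := by
  have hiff : ∀ u ≠ v, G.Adj a u ↔ G.Adj b u := by
    intro u huv
    rw [G.adj_comm a u, G.adj_comm b u]
    by_cases huM : u ∈ M
    · exact iff_of_false (fun h => C.valid h (hmono u huM))
        (fun h => C.valid h ((hmono u huM).trans (hmono b hb).symm))
    · rcases hM.2 u ⟨⟨mem_univ u, huv⟩, huM⟩ with hall | hnone
      exacts [iff_of_true (hall a ha) (hall b hb), iff_of_false (hnone a ha) (hnone b hb)]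
  have hv : ¬ (v ∈ G.neighborSet a ↔ v ∈ G.neighborSet b) := fun hv =>
    hab (hG.eq_of_neighborSet_eq (Set.ext fun u => by
      by_cases huv : u = v
      · exact huv ▸ hv
      · exact hiff u huv))
  have hav : a ≠ v := (hM.1 ha).2
  have hbv : b ≠ v := (hM.1 hb).2
  by_cases hva : v ∈ G.neighborSet a
  · have hvb : v ∉ G.neighborSet b := fun h => hv (iff_of_true hva h)
    exact ⟨a, b, hab, hbv, hvb, neighborSet_eq_insert_of_forall_ne hiff hva hvb⟩
  · have hvb : v ∈ G.neighborSet b := by_contra fun h => hv (iff_of_false hva h)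
    exact ⟨b, a, hab.symm, hav, hva,
      neighborSet_eq_insert_of_forall_ne (fun u hu => (hiff u hu).symm) hvb hva⟩

theorem hasPendantOrTwinsAt_of_not_isPrimeOn_diff (C : G.Coloring Bool)
    (hP5 : ¬ HasInducedP5On G univ) (hG : GraphIsPrimeOn G univ) (hcard : 4 ≤ (univ : Set V).encard)
    (hv : ¬ GraphIsPrimeOn G (univ \ {v})) : HasPendantOrTwinsAt G v := by
  obtain ⟨M, hM, ⟨a, ha, b, hb, hab⟩, hMW⟩ :=
    exists_nontrivial_module_of_not_isPrimeOn (le_encard_diff_singleton hcard (mem_univ v)) hv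
  by_cases hmix : ∃ p ∈ M, C p ≠ C a
  · obtain ⟨p, hp, hpa⟩ := hmix
    exact Or.inl (exists_pendant_of_module_of_color_ne C hP5 hG hM hMW hp ha hpa)
  · push Not at hmix
    exact Or.inr (exists_twins_of_module_of_color_eq C hG hM ha hb hab hmix)

end Critical

def IsLeastNeighbor (G : SimpleGraph V) (v m : V) : Prop :=
  G.Adj v m ∧ ∀ z, G.Adj v z → G.neighborSet m ⊆ G.neighborSet z

section LeastNeighbor

variable {G : SimpleGraph V} {a b m m' v z : V}

theorem IsLeastNeighbor.symm (h : IsLeastNeighbor G v m) : IsLeastNeighbor G m v :=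
  ⟨h.1.symm, fun _ hmz y hvy => (h.2 y hvy hmz).symm⟩

theorem IsLeastNeighbor.mem_neighborSet_iff (C : G.Coloring Bool) (h : IsLeastNeighbor G v m) :
    z ∈ G.neighborSet m ↔ C z = C v ∧ G.neighborSet v ⊆ G.neighborSet z :=
  ⟨fun hmz => ⟨C.eq_of_adj_of_adj hmz.symm h.1, h.symm.2 z hmz⟩,
    fun hz => (hz.2 h.1).symm⟩

theorem IsLeastNeighbor.unique (C : G.Coloring Bool) (hG : GraphIsPrimeOn G univ)
    (h : IsLeastNeighbor G v m) (h' : IsLeastNeighbor G v m') : m = m' :=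
  hG.eq_of_neighborSet_eq (Set.ext fun _ =>
    (h.mem_neighborSet_iff C).trans (h'.mem_neighborSet_iff C).symm)

theorem isLeastNeighbor_of_neighborSet_eq_insert (C : G.Coloring Bool)
    (hP5 : ¬ HasInducedP5On G univ) (hG : GraphIsPrimeOn G univ) (hvb : v ∉ G.neighborSet b)
    (h : G.neighborSet a = insert v (G.neighborSet b)) : IsLeastNeighbor G v a := by
  have hav : G.Adj a v := show v ∈ G.neighborSet a from h ▸ mem_insert v _
  refine ⟨hav.symm, fun z hvz => ?_⟩
  obtain ⟨u, -, hbu⟩ := hG.exists_adj (mem_univ b)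
  have hCab : C a = C b :=
    C.eq_of_adj_of_adj (show u ∈ G.neighborSet a from h ▸ mem_insert_of_mem v hbu) hbu
  rcases nested_of_color_eq C hP5 hG.preconnected
    ((C.eq_of_adj_of_adj hvz.symm hav).trans hCab) with hzb | hbz
  · exact absurd (hzb hvz.symm) hvb
  · exact h ▸ insert_subset hvz.symm hbz

theorem HasPendantOrTwinsAt.exists_isLeastNeighbor (C : G.Coloring Bool)
    (hP5 : ¬ HasInducedP5On G univ) (hG : GraphIsPrimeOn G univ) (h : HasPendantOrTwinsAt G v) :
    ∃ m, IsLeastNeighbor G v m := by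
  rcases h with ⟨a, ha⟩ | ⟨a, b, -, -, hvb, h⟩
  · exact ⟨a, (show v ∈ G.neighborSet a from ha ▸ rfl).symm,
      fun z hvz => ha ▸ singleton_subset_iff.2 hvz.symm⟩
  · exact ⟨a, isLeastNeighbor_of_neighborSet_eq_insert C hP5 hG hvb h⟩

end LeastNeighbor

section Construction

variable {G : SimpleGraph V} {φ : V → V} {x : V}

theorem involutive_of_isLeastNeighbor (C : G.Coloring Bool) (hG : GraphIsPrimeOn G univ)
    (hφ : ∀ v, IsLeastNeighbor G v (φ v)) : Function.Involutive φ := fun v =>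
  (hφ (φ v)).unique C hG (hφ v).symm

theorem isHalfGraphWith_of_isLeastNeighbor (C : G.Coloring Bool) (hP5 : ¬ HasInducedP5On G univ)
    (hG : GraphIsPrimeOn G univ) (hφ : ∀ v, IsLeastNeighbor G v (φ v)) :
    IsHalfGraphWith G {v | C v = true} {v | C v = false}
      (fun x x' => G.neighborSet x' ⊆ G.neighborSet x) φ := by
  have hφφ := involutive_of_isLeastNeighbor C hG hφ
  have hCφ : ∀ v, C (φ v) = !C v := fun v => Bool.eq_not_iff.2 (C.valid (hφ v).1).symm
  have hadj : ∀ u v, C u = true → G.Adj u v →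
      C (φ v) = true ∧ G.neighborSet (φ v) ⊆ G.neighborSet u := by
    intro u v hu huv
    rw [← hφφ v] at huv
    obtain ⟨hC, hsub⟩ := ((hφ (φ v)).mem_neighborSet_iff C).1 huv.symm
    exact ⟨hC ▸ hu, hsub⟩
  refine ⟨disjoint_left.2 fun v h1 h2 => by simp_all, eq_univ_of_forall fun v => by
      cases h : C v <;> simp [h],
    ⟨fun _ _ => subset_rfl, fun x _ y _ hxy hyx => hG.eq_of_neighborSet_eq (hyx.antisymm hxy),
      fun _ _ _ _ _ _ hxy hyz => hyz.trans hxy,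
      fun x hx y hy => nested_of_color_eq C hP5 hG.preconnected (hy.trans hx.symm)⟩,
    ⟨fun v hv => by simp_all, fun _ _ _ _ h => hφφ.injective h,
      fun y hy => ⟨φ y, by simp_all, hφφ y⟩⟩, fun u v => ⟨fun huv => ?_, ?_⟩⟩
  · cases hu : C u
    · have hv : C v = true := by simpa [hu] using (C.valid huv).symm
      obtain ⟨hC, hsub⟩ := hadj v u hv huv.symm
      exact ⟨v, hv, φ u, hC, hsub, Or.inr ⟨rfl, (hφφ u).symm⟩⟩
    · obtain ⟨hC, hsub⟩ := hadj u v hu huv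
      exact ⟨u, hu, φ v, hC, hsub, Or.inl ⟨rfl, (hφφ v).symm⟩⟩
  · rintro ⟨x, hx, x', hx', hxx', ⟨rfl, rfl⟩ | ⟨rfl, rfl⟩⟩ <;>
    have hxφx' := ((hφ x').mem_neighborSet_iff C).2 ⟨hx.trans hx'.symm, hxx'⟩
    exacts [hxφx'.symm, hxφx']

theorem exists_pred_of_isLeastNeighbor (C : G.Coloring Bool) (hP5 : ¬ HasInducedP5On G univ)
    (hG : GraphIsPrimeOn G univ) (hφ : ∀ v, IsLeastNeighbor G v (φ v))
    (hx : HasPendantOrTwinsAt G x)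
    (hmin : ¬ ∀ y, C y = C x → G.neighborSet y ⊆ G.neighborSet x) :
    ∃ p, C p = C x ∧ p ≠ x ∧ G.neighborSet x ⊆ G.neighborSet p ∧
      ∀ z, C z = C x → G.neighborSet z ⊆ G.neighborSet p → G.neighborSet x ⊆ G.neighborSet z →
        z = p ∨ z = x := by
  rcases hx with ⟨a, ha⟩ | ⟨a, b, hab, -, hxb, h⟩
  · refine absurd (fun y hy => ?_) hmin
    have hxa : a ∈ G.neighborSet x := (show x ∈ G.neighborSet a from ha ▸ rfl).symm
    rcases nested_of_color_eq C hP5 hG.preconnected hy with hyx | hxy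
    · exact hyx
    · have hya : y ∈ G.neighborSet a := (hxy hxa).symm
      rw [ha, mem_singleton_iff] at hya
      exact hya ▸ subset_rfl
  · have hax : a = φ x :=
      (isLeastNeighbor_of_neighborSet_eq_insert C hP5 hG hxb h).unique C hG (hφ x)
    subst hax
    have hφx := fun z => (hφ x).mem_neighborSet_iff C (z := z)
    have hφb := fun z => (hφ b).symm.mem_neighborSet_iff C (z := z)
    obtain ⟨hCb, hxb'⟩ := (hφx _).1 (h ▸ mem_insert_of_mem x ((hφ b).1 : φ b ∈ G.neighborSet b))
    refine ⟨φ b, hCb, fun hbx => hab (by rw [← hbx, involutive_of_isLeastNeighbor C hG hφ]),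
      hxb', ?_⟩
    intro z hz hzb hxz
    rcases (h ▸ (hφx _).2 ⟨hz, hxz⟩ : z ∈ insert x (G.neighborSet b)) with hzx | hzb'
    · exact Or.inr hzx
    · exact Or.inl (hG.eq_of_neighborSet_eq (hzb.antisymm ((hφb _).1 hzb').2))

theorem exists_succ_of_isLeastNeighbor (C : G.Coloring Bool) (hP5 : ¬ HasInducedP5On G univ)
    (hG : GraphIsPrimeOn G univ) (hφ : ∀ v, IsLeastNeighbor G v (φ v))
    (hx : HasPendantOrTwinsAt G (φ x))
    (hmax : ¬ ∀ y, C y = C x → G.neighborSet x ⊆ G.neighborSet y) :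
    ∃ s, C s = C x ∧ s ≠ x ∧ G.neighborSet s ⊆ G.neighborSet x ∧
      ∀ z, C z = C x → G.neighborSet z ⊆ G.neighborSet x → G.neighborSet s ⊆ G.neighborSet z →
        z = x ∨ z = s := by
  have hφx := fun z => (hφ x).mem_neighborSet_iff C (z := z)
  rcases hx with ⟨a, ha⟩ | ⟨a, b, hab, -, hxb, h⟩
  · refine absurd (fun y hy => ?_) hmax
    have hxa : G.neighborSet x ⊆ {φ x} :=
      ha ▸ ((hφx _).1 (show φ x ∈ G.neighborSet a from ha ▸ rfl).symm).2
    rcases nested_of_color_eq C hP5 hG.preconnected hy with hyx | hxy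
    · obtain ⟨u, -, hyu⟩ := hG.exists_adj (mem_univ y)
      have hu : u = φ x := hxa (hyx hyu)
      exact hxa.trans (singleton_subset_iff.2 (hu ▸ hyu))
    · exact hxy
  · have hax : a = x := by
      rw [(isLeastNeighbor_of_neighborSet_eq_insert C hP5 hG hxb h).unique C hG (hφ (φ x)),
        involutive_of_isLeastNeighbor C hG hφ]
    subst hax
    obtain ⟨u, -, hbu⟩ := hG.exists_adj (mem_univ b)
    have hCb : C b = C a :=
      C.eq_of_adj_of_adj hbu (show u ∈ G.neighborSet a from h ▸ mem_insert_of_mem _ hbu)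
    refine ⟨b, hCb, Ne.symm hab, h ▸ subset_insert _ _, fun z hz hza hbz => ?_⟩
    by_cases hzφ : φ a ∈ G.neighborSet z
    · exact Or.inl (hG.eq_of_neighborSet_eq (hza.antisymm ((hφx _).1 hzφ.symm).2))
    · refine Or.inr (hG.eq_of_neighborSet_eq (subset_antisymm (fun u hu => ?_) hbz))
      rcases (h ▸ hza hu : u ∈ insert (φ a) (G.neighborSet b)) with rfl | hub
      exacts [absurd hu hzφ, hub]

end Construction

theorem isDiscreteHalfGraph_of_isCriticalOn {G : SimpleGraph V} (C : G.Coloring Bool)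
    (hP5 : ¬ HasInducedP5On G univ) (hG : GraphIsCriticalOn G univ)
    (hcard : 4 ≤ (univ : Set V).encard) : IsDiscreteHalfGraph G := by
  obtain ⟨hG, hcrit⟩ := hG
  have hpt : ∀ v, HasPendantOrTwinsAt G v := fun v =>
    hasPendantOrTwinsAt_of_not_isPrimeOn_diff C hP5 hG hcard (hcrit v (mem_univ v))
  choose φ hφ using fun v => (hpt v).exists_isLeastNeighbor C hP5 hG
  refine ⟨_, _, _, φ, isHalfGraphWith_of_isLeastNeighbor C hP5 hG hφ,
    fun x hx hmin => ?_, fun x hx hmax => ?_⟩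
  · obtain ⟨p, hp, hpx, hxp, h⟩ := exists_pred_of_isLeastNeighbor C hP5 hG hφ (hpt x)
      fun h => hmin fun y hy => h y (hy.trans hx.symm)
    exact ⟨p, hp.trans hx, hpx, hxp, fun z hz => h z (hz.trans hx.symm)⟩
  · obtain ⟨s, hs, hsx, hsx', h⟩ := exists_succ_of_isLeastNeighbor C hP5 hG hφ (hpt (φ x))
      fun h => hmax fun y hy => h y (hy.trans hx.symm)
    exact ⟨s, hs.trans hx, hsx, hsx', fun z hz => h z (hz.trans hx.symm)⟩

/-- Theorem 1.26: a bipartite graph on at least 4 vertices is a discrete half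
graph iff it is `P₅`-free and critical. -/
theorem statement8 (G : SimpleGraph V) (hbip : IsBipartite G)
    (hcard : 4 ≤ (Set.univ : Set V).encard) :
    IsDiscreteHalfGraph G ↔
      (¬ HasInducedP5On G Set.univ ∧ GraphIsCriticalOn G Set.univ) := by
  obtain ⟨C⟩ := hbip.nonempty_coloring
  constructor
  · rintro ⟨X, Y, r, φ, hH, hdisc⟩
    exact ⟨not_hasInducedP5On_of_nested fun _ _ _ => hH.nested_of_adj_of_adj,
      isPrimeOn_univ_of_twinFree C hH.preconnected (fun _ _ => hH.eq_of_neighborSet_eq)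
        ((by norm_num : (3 : ℕ∞) ≤ 4).trans hcard),
      fun v _ => (hH.hasPendantOrTwinsAt hdisc v).not_isPrimeOn_diff⟩
  · rintro ⟨hP5, hG⟩
    exact isDiscreteHalfGraph_of_isCriticalOn C hP5 hG hcard
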